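/- arXiv:1103.4210 — 11 statements merged into one kernel-verified Lean document; each statement's English description precedes it below -/
import Mathlib

section
/- Let n be a nonzero real number, σ a real constant, and let a, b, c : ℝ → ℝ with a differentiable. Suppose y : ℝ → ℝ is differentiable and satisfies the Riccati equation y' = −y² + b·y + c, and x : ℝ → ℝ is twice differentiable, nowhere vanishing, and satisfies x' = a·x² + n·y·x + σ. Then x satisfies the Gambier equation x'' = ((n−1)/n)·(x')²/x + a·((n+2)/n)·x·x' + b·x' − ((n−2)/n)·σ·x'/x − (a²/n)·x³ + (a' − a·b)·x² + (c·n − 2aσ/n)·x − b·σ − σ²/(n·x). -/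
/-- The Gambier equation from two Riccati equations in cascade. -/
theorem gambier_from_riccati_cascade
    (n σ : ℝ) (hn : n ≠ 0)
    (a b c : ℝ → ℝ) (ha : Differentiable ℝ a)
    (y : ℝ → ℝ) (hy : Differentiable ℝ y)
    (hyeq : ∀ t, deriv y t = -(y t) ^ 2 + b t * y t + c t)
    (x : ℝ → ℝ) (hx : Differentiable ℝ x) (hx' : Differentiable ℝ (deriv x))
    (hx0 : ∀ t, x t ≠ 0)
    (hxeq : ∀ t, deriv x t = a t * (x t) ^ 2 + n * y t * x t + σ) :
    ∀ t, deriv (deriv x) t =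
      ((n - 1) / n) * (deriv x t) ^ 2 / x t
      + a t * ((n + 2) / n) * x t * deriv x t
      + b t * deriv x t
      - ((n - 2) / n) * σ * deriv x t / x t
      - (a t) ^ 2 / n * (x t) ^ 3
      + (deriv a t - a t * b t) * (x t) ^ 2
      + (c t * n - 2 * a t * σ / n) * x t
      - b t * σ
      - σ ^ 2 / (n * x t) := by
  intro t
  have hd : deriv x = fun s => a s * (x s) ^ 2 + n * y s * x s + σ := funext hxeq
  have h1 : HasDerivAt (fun s => a s * (x s) ^ 2 + n * y s * x s + σ)
      (deriv a t * (x t) ^ 2 + a t * (2 * x t * deriv x t)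
        + (n * deriv y t * x t + n * y t * deriv x t)) t := by
    have hax : HasDerivAt x (deriv x t) t := (hx t).hasDerivAt
    have haa : HasDerivAt a (deriv a t) t := (ha t).hasDerivAt
    have hay : HasDerivAt y (deriv y t) t := (hy t).hasDerivAt
    have h2 : HasDerivAt (fun s => (x s) ^ 2) (2 * x t * deriv x t) t := by
      simpa [mul_comm, mul_assoc] using hax.fun_pow 2
    exact ((haa.mul h2).add (((hay.const_mul n).mul hax).congr_deriv (by ring))).add_const σ
  have hder : deriv (deriv x) t = deriv a t * (x t) ^ 2 + a t * (2 * x t * deriv x t)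
        + (n * deriv y t * x t + n * y t * deriv x t) := by
    conv_lhs => rw [hd]
    exact h1.deriv
  have hxt := hx0 t
  have hyt : y t = (deriv x t - a t * (x t) ^ 2 - σ) / (n * x t) := by
    field_simp
    linarith [hxeq t]
  rw [hder, hyeq t, hyt]
  field_simp
  ring
end

section
/- Let u : ℝ → ℝ be continuous and let ψ₁, ψ₂ : ℝ → ℝ be twice differentiable solutions of Hill's equation ψ'' + u·ψ = 0 whose Wronskian ψ₁·ψ₂' − ψ₁'·ψ₂ equals 1 at every point. Let A, B, C be real constants such that A·ψ₁(t)² + 2B·ψ₁(t)·ψ₂(t) + C·ψ₂(t)² > 0 for all t, and define ψ(t) = √(A·ψ₁(t)² + 2B·ψ₁(t)·ψ₂(t) + C·ψ₂(t)²). Then ψ satisfies the Ermakov–Pinney equation ψ'' + u·ψ = σ/ψ³ with σ = AC − B². -/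
/-- From solutions of Hill's equation with unit Wronskian to the
Ermakov–Pinney equation. -/
theorem ermakov_pinney_from_hill
    (u : ℝ → ℝ) (hu : Continuous u)
    (ψ₁ ψ₂ : ℝ → ℝ)
    (hψ₁ : Differentiable ℝ ψ₁) (hψ₁' : Differentiable ℝ (deriv ψ₁))
    (hψ₂ : Differentiable ℝ ψ₂) (hψ₂' : Differentiable ℝ (deriv ψ₂))
    (hill₁ : ∀ t, deriv (deriv ψ₁) t + u t * ψ₁ t = 0)
    (hill₂ : ∀ t, deriv (deriv ψ₂) t + u t * ψ₂ t = 0)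
    (hW : ∀ t, ψ₁ t * deriv ψ₂ t - deriv ψ₁ t * ψ₂ t = 1)
    (A B C : ℝ)
    (hpos : ∀ t, A * (ψ₁ t) ^ 2 + 2 * B * ψ₁ t * ψ₂ t + C * (ψ₂ t) ^ 2 > 0)
    (ψ : ℝ → ℝ)
    (hψ : ∀ t, ψ t = Real.sqrt (A * (ψ₁ t) ^ 2 + 2 * B * ψ₁ t * ψ₂ t + C * (ψ₂ t) ^ 2)) :
    ∀ t, deriv (deriv ψ) t + u t * ψ t = (A * C - B ^ 2) / (ψ t) ^ 3 := by
  set Q : ℝ → ℝ := fun t => A * (ψ₁ t) ^ 2 + 2 * B * ψ₁ t * ψ₂ t + C * (ψ₂ t) ^ 2 with hQdef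
  set R : ℝ → ℝ := fun t => 2*A*ψ₁ t*deriv ψ₁ t + 2*B*(deriv ψ₁ t*ψ₂ t + ψ₁ t*deriv ψ₂ t)
      + 2*C*ψ₂ t*deriv ψ₂ t with hRdef
  have hQ : ∀ s, HasDerivAt Q (R s) s := by
    intro s
    have h :=
      ((((hψ₁ s).hasDerivAt.pow 2).const_mul A).add
        (((hψ₁ s).hasDerivAt.const_mul (2*B)).mul (hψ₂ s).hasDerivAt)).add
      (((hψ₂ s).hasDerivAt.pow 2).const_mul C)
    refine h.congr_deriv ?_
    push_cast
    ring
  have hψf : ψ = fun t => Real.sqrt (Q t) := funext hψ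
  have hsq : ∀ s, Real.sqrt (Q s) > 0 := fun s => Real.sqrt_pos.mpr (hpos s)
  have hψpos : ∀ s, ψ s > 0 := by intro s; rw [hψ s]; exact hsq s
  have hψd : ∀ s, HasDerivAt ψ (R s / (2 * ψ s)) s := by
    intro s
    rw [hψf]
    have hpq : Q s ≠ 0 := ne_of_gt (hpos s)
    have h := (Real.hasDerivAt_sqrt hpq).comp s (hQ s)
    refine h.congr_deriv (Eq.symm ?_)
    show R s / (2 * Real.sqrt (Q s)) = _
    ring
  have hderivψ : deriv ψ = fun s => R s / (2 * ψ s) := funext fun s => (hψd s).deriv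
  intro t
  -- derivative of R
  set R' : ℝ → ℝ := fun s => 2*A*(deriv ψ₁ s*deriv ψ₁ s + ψ₁ s*deriv (deriv ψ₁) s)
      + 2*B*(deriv (deriv ψ₁) s*ψ₂ s + 2*deriv ψ₁ s*deriv ψ₂ s + ψ₁ s*deriv (deriv ψ₂) s)
      + 2*C*(deriv ψ₂ s*deriv ψ₂ s + ψ₂ s*deriv (deriv ψ₂) s) with hR'def
  have hR : HasDerivAt R (R' t) t := by
    have h :=
      (((((hψ₁ t).hasDerivAt.const_mul (2*A)).mul (hψ₁' t).hasDerivAt).add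
        ((((hψ₁' t).hasDerivAt.mul (hψ₂ t).hasDerivAt).add
          ((hψ₁ t).hasDerivAt.mul (hψ₂' t).hasDerivAt)).const_mul (2*B))).add
      (((hψ₂ t).hasDerivAt.const_mul (2*C)).mul (hψ₂' t).hasDerivAt))
    refine h.congr_deriv ?_
    ring
  -- derivative of deriv ψ
  have hdd : HasDerivAt (deriv ψ)
      ((R' t * (2 * ψ t) - R t * (2 * (R t / (2 * ψ t)))) / (2 * ψ t)^2) t := by
    rw [hderivψ]
    exact hR.div ((hψd t).const_mul 2) (mul_pos two_pos (hψpos t)).ne'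
  have hdd' : deriv (deriv ψ) t
      = (R' t * (2 * ψ t) - R t * (2 * (R t / (2 * ψ t)))) / (2 * ψ t)^2 := hdd.deriv
  -- substitute Hill's equations
  have h1 : deriv (deriv ψ₁) t = -(u t * ψ₁ t) := by linarith [hill₁ t]
  have h2 : deriv (deriv ψ₂) t = -(u t * ψ₂ t) := by linarith [hill₂ t]
  have hs2 : ψ t ^ 2 = Q t := by rw [hψ t]; exact Real.sq_sqrt (hpos t).le
  have key : 4 * Q t * (A*(deriv ψ₁ t)^2 + 2*B*deriv ψ₁ t*deriv ψ₂ t + C*(deriv ψ₂ t)^2)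
      - (R t)^2 = 4*(A*C-B^2) := by
    have hw := hW t
    simp only [hQdef, hRdef]
    linear_combination (4*(A*C-B^2)*(ψ₁ t*deriv ψ₂ t - deriv ψ₁ t*ψ₂ t + 1)) * hw
  have hR't : R' t = 2*(A*(deriv ψ₁ t)^2 + 2*B*deriv ψ₁ t*deriv ψ₂ t + C*(deriv ψ₂ t)^2)
      - 2 * u t * Q t := by
    simp only [hR'def, h1, h2, hQdef]
    ring
  rw [hdd', hR't]
  have hψt := hψpos t
  field_simp
  linear_combination key + (4 * (A * deriv ψ₁ t ^ 2 + 2 * B * deriv ψ₁ t * deriv ψ₂ t + C * deriv ψ₂ t ^ 2) + 4 * u t * ψ t ^ 2) * hs2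
end

section
/- Let Ω, K be real constants and a a nonzero real constant. Suppose q : ℝ → ℝ is twice differentiable, nowhere vanishing, and satisfies the generalized Ermakov–Pinney equation q'' + Ω²·q = −K/q⁵. Then x = a/q³ satisfies x'' − (4/3)·(x')²/x − 3·(K/a²)·x³ − 3·Ω²·x = 0. -/
/-- The map x = a/q³ (constant a) sends the generalized
Ermakov–Pinney equation to a reduced Gambier-type equation. -/
theorem reduced_gambier_from_generalized_ermakov_pinney
    (Ω K a : ℝ) (ha : a ≠ 0)
    (q : ℝ → ℝ)
    (hq : Differentiable ℝ q) (hq' : Differentiable ℝ (deriv q))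
    (hq0 : ∀ t, q t ≠ 0)
    (hEP : ∀ t, deriv (deriv q) t + Ω ^ 2 * q t = -K / (q t) ^ 5) :
    ∀ t, deriv (deriv (fun s => a / (q s) ^ 3)) t
      - (4 / 3) * (deriv (fun s => a / (q s) ^ 3) t) ^ 2 / (a / (q t) ^ 3)
      - 3 * (K / a ^ 2) * (a / (q t) ^ 3) ^ 3
      - 3 * Ω ^ 2 * (a / (q t) ^ 3) = 0 := by
  have h1 : ∀ t, HasDerivAt (fun s => a / (q s) ^ 3)
      (-3 * a * deriv q t / (q t) ^ 4) t := by
    intro t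
    have h := (hasDerivAt_const t a).fun_div ((hq t).hasDerivAt.fun_pow 3)
      (pow_ne_zero 3 (hq0 t))
    refine h.congr_deriv ?_
    have hqt := hq0 t
    field_simp
    ring
  have hd1 : deriv (fun s => a / (q s) ^ 3)
      = fun t => -3 * a * deriv q t / (q t) ^ 4 := by
    funext t; exact (h1 t).deriv
  have h2 : ∀ t, HasDerivAt (fun s => -3 * a * deriv q s / (q s) ^ 4)
      ((-3 * a * deriv (deriv q) t * (q t) ^ 4
        - (-3 * a * deriv q t) * (4 * (q t) ^ 3 * deriv q t)) / ((q t) ^ 4) ^ 2) t := by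
    intro t
    exact (((hq' t).hasDerivAt.const_mul (-3 * a)).div ((hq t).hasDerivAt.pow 4)
      (pow_ne_zero 4 (hq0 t)))
  intro t
  have hq'' : deriv (deriv q) t = -K / (q t) ^ 5 - Ω ^ 2 * q t := by
    have := hEP t; linarith
  rw [hd1, (h2 t).deriv, hq'']
  simp only []
  have hqt := hq0 t
  field_simp
  ring
end

section
/- Let λ, μ, A, B be real constants and α a nonzero real constant. Suppose q : ℝ → ℝ is twice differentiable, nowhere vanishing, and satisfies q'' + λ·q' + μ·q = −A/q³ − B/q. Then x = α/q² satisfies x'' = (3/2)·(x')²/x − λ·x' + 2μ·x + (2A/α²)·x³ + (2B/α)·x², which is the Gambier equation with n = −2 and σ = 0. -/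
/-- Proposition 2.4: The folding transformation x = α/q² maps the
equation q'' + λq' + μq = −A/q³ − B/q to the Gambier equation with n = −2, σ = 0. -/
theorem gambier_n_neg_two_from_folding
    (lam μ A B α : ℝ) (hα : α ≠ 0)
    (q : ℝ → ℝ)
    (hq : Differentiable ℝ q) (hq' : Differentiable ℝ (deriv q))
    (hq0 : ∀ t, q t ≠ 0)
    (heq : ∀ t, deriv (deriv q) t + lam * deriv q t + μ * q t
        = -A / (q t) ^ 3 - B / q t) :
    ∀ t, deriv (deriv (fun s => α / (q s) ^ 2)) t
      = (3 / 2) * (deriv (fun s => α / (q s) ^ 2) t) ^ 2 / (α / (q t) ^ 2)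
        - lam * deriv (fun s => α / (q s) ^ 2) t
        + 2 * μ * (α / (q t) ^ 2)
        + (2 * A / α ^ 2) * (α / (q t) ^ 2) ^ 3
        + (2 * B / α) * (α / (q t) ^ 2) ^ 2 := by
  have h1 : ∀ t, HasDerivAt (fun s => α / (q s) ^ 2)
      (-(2 * α * deriv q t) / (q t) ^ 3) t := by
    intro t
    have hd : HasDerivAt (fun s => (q s) ^ 2)
        ((2 : ℕ) * (q t) ^ 1 * deriv q t) t := (hq t).hasDerivAt.pow 2
    have h := (hd.inv (pow_ne_zero 2 (hq0 t))).const_mul α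
    have h2 : HasDerivAt (fun s => α / (q s) ^ 2)
        (α * -(↑2 * q t ^ 1 * deriv q t / (q t ^ 2) ^ 2)) t := by
      simpa [div_eq_mul_inv] using h
    convert h2 using 1
    have := hq0 t
    field_simp
  have hderiv1 : deriv (fun s => α / (q s) ^ 2)
      = fun t => -(2 * α * deriv q t) / (q t) ^ 3 := by
    funext t; exact (h1 t).deriv
  intro t
  have hnum : HasDerivAt (fun s => -(2 * α * deriv q s))
      (-(2 * α * deriv (deriv q) t)) t := by
    exact ((hq' t).hasDerivAt.const_mul (2 * α)).neg
  have hden : HasDerivAt (fun s => (q s) ^ 3)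
      ((3 : ℕ) * (q t) ^ 2 * deriv q t) t := (hq t).hasDerivAt.pow 3
  have h2 : HasDerivAt (fun s => -(2 * α * deriv q s) / (q s) ^ 3)
      ((-(2 * α * deriv (deriv q) t) * (q t) ^ 3
        - -(2 * α * deriv q t) * ((3 : ℕ) * (q t) ^ 2 * deriv q t)) / ((q t) ^ 3) ^ 2) t :=
    hnum.div hden (pow_ne_zero 3 (hq0 t))
  rw [hderiv1]
  rw [h2.deriv]
  have hqq := hq0 t
  have hA : deriv (deriv q) t = -A / (q t) ^ 3 - B / q t - lam * deriv q t - μ * q t := by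
    have := heq t; linarith
  rw [hA]
  field_simp
  ring
end

section
/- Let a, σ be real constants. Suppose q : ℝ → ℝ is twice differentiable, nowhere vanishing, and satisfies the Liénard-type equation q'' + 2a·q²·q' + (aσ/2)·q + (a/2)²·q⁵ + (σ/2)²/q³ = 0. Then x = −q² satisfies the reduced Gambier equation x'' = (1/2)·(x')²/x + 2a·x·x' − (a²/2)·x³ − aσ·x − σ²/(2x). -/
/-- The folding transformation x = −q² maps the Liénard-type
equation to the reduced Gambier equation (n = 2, b = 0, constant a). -/
theorem reduced_gambier_from_lienard_folding
    (a σ : ℝ)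
    (q : ℝ → ℝ)
    (hq : Differentiable ℝ q) (hq' : Differentiable ℝ (deriv q))
    (hq0 : ∀ t, q t ≠ 0)
    (heq : ∀ t, deriv (deriv q) t + 2 * a * (q t) ^ 2 * deriv q t
        + ((a * σ / 2) * q t + (a / 2) ^ 2 * (q t) ^ 5
          + (σ / 2) ^ 2 / (q t) ^ 3) = 0) :
    ∀ t, deriv (deriv (fun s => -(q s) ^ 2)) t
      = (1 / 2) * (deriv (fun s => -(q s) ^ 2) t) ^ 2 / (-(q t) ^ 2)
        + 2 * a * (-(q t) ^ 2) * deriv (fun s => -(q s) ^ 2) t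
        - (a ^ 2 / 2) * (-(q t) ^ 2) ^ 3
        - a * σ * (-(q t) ^ 2)
        - σ ^ 2 / (2 * (-(q t) ^ 2)) := by
  have hd1 : deriv (fun s => -(q s) ^ 2) = fun t => -(2 * q t * deriv q t) := by
    funext t
    have : HasDerivAt (fun s => -(q s) ^ 2) (-(2 * q t * deriv q t)) t := by
      have := ((hq t).hasDerivAt.pow 2).neg
      simpa [Pi.neg_def, Pi.pow_def, mul_comm, mul_assoc, mul_left_comm] using this
    exact this.deriv
  intro t
  rw [hd1]
  have hd2 : deriv (fun t => -(2 * q t * deriv q t)) t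
      = -(2 * (deriv q t * deriv q t + q t * deriv (deriv q) t)) := by
    have : HasDerivAt (fun t => -(2 * q t * deriv q t))
        (-(2 * (deriv q t * deriv q t + q t * deriv (deriv q) t))) t := by
      have h := ((hq t).hasDerivAt.mul (hq' t).hasDerivAt).const_mul (2:ℝ)
      have := h.neg
      simpa [Pi.neg_def, mul_add, mul_comm, mul_assoc, mul_left_comm] using this
    exact this.deriv
  rw [hd2]
  have hq2 : deriv (deriv q) t = -(2 * a * (q t) ^ 2 * deriv q t
      + ((a * σ / 2) * q t + (a / 2) ^ 2 * (q t) ^ 5 + (σ / 2) ^ 2 / (q t) ^ 3)) := by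
    have := heq t; linarith
  rw [hq2]
  have h0 := hq0 t
  field_simp
  ring
end

section
/- Let a be a real constant. Suppose q : ℝ → ℝ is twice differentiable, nowhere vanishing, and satisfies q'' + 2a·q²·q' + (a/2)²·q⁵ = 0. Then x = −q² satisfies x'' = (1/2)·(x')²/x + 2a·x·x' − (a²/2)·x³. -/
/-- The folding transformation x = −q² with σ = 0. -/
theorem reduced_gambier_from_folding_sigma_zero
    (a : ℝ)
    (q : ℝ → ℝ)
    (hq : Differentiable ℝ q) (hq' : Differentiable ℝ (deriv q))
    (hq0 : ∀ t, q t ≠ 0)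
    (heq : ∀ t, deriv (deriv q) t + 2 * a * (q t) ^ 2 * deriv q t
        + (a / 2) ^ 2 * (q t) ^ 5 = 0) :
    ∀ t, deriv (deriv (fun s => -(q s) ^ 2)) t
      = (1 / 2) * (deriv (fun s => -(q s) ^ 2) t) ^ 2 / (-(q t) ^ 2)
        + 2 * a * (-(q t) ^ 2) * deriv (fun s => -(q s) ^ 2) t
        - (a ^ 2 / 2) * (-(q t) ^ 2) ^ 3 := by
  have hd1 : deriv (fun s => -(q s) ^ 2) = fun t => -(2 * q t * deriv q t) := by
    funext t
    have h1 : HasDerivAt (fun s => -(q s) ^ 2) (-(2 * q t * deriv q t)) t := by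
      have := ((hq t).hasDerivAt.pow 2).neg
      refine (this : HasDerivAt (fun s => -(q s) ^ 2) _ t).congr_deriv ?_
      simp [mul_comm, mul_assoc, mul_left_comm]
    exact h1.deriv
  intro t
  have h2 : deriv (deriv (fun s => -(q s) ^ 2)) t
      = -(2 * (deriv q t * deriv q t + q t * deriv (deriv q) t)) := by
    rw [hd1]
    have heqf : (fun t => -(2 * q t * deriv q t)) = fun x => -(2 * (q x * deriv q x)) := by
      funext x; ring
    rw [heqf]
    exact ((((hq t).hasDerivAt.mul (hq' t).hasDerivAt).const_mul 2).neg).deriv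
  rw [h2, hd1]
  have hqq : deriv (deriv q) t = -(2 * a * (q t) ^ 2 * deriv q t) - (a / 2) ^ 2 * (q t) ^ 5 := by
    linarith [heq t]
  rw [hqq]
  have hne : -(q t) ^ 2 ≠ 0 := by simpa using pow_ne_zero 2 (hq0 t)
  field_simp [hq0 t]
  ring
end

section
/- Let σ be a real constant. Suppose q : ℝ → ℝ is twice differentiable, nowhere vanishing, and satisfies q'' + (σ²/4)·(1/q³) = 0. Then x = −q² satisfies x'' = (x')²/(2x) − σ²/(2x). -/
/-- The folding transformation x = −q² with a = 0. -/
theorem reduced_gambier_from_folding_a_zero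
    (σ : ℝ)
    (q : ℝ → ℝ)
    (hq : Differentiable ℝ q) (hq' : Differentiable ℝ (deriv q))
    (hq0 : ∀ t, q t ≠ 0)
    (heq : ∀ t, deriv (deriv q) t + (σ ^ 2 / 4) * (1 / (q t) ^ 3) = 0) :
    ∀ t, deriv (deriv (fun s => -(q s) ^ 2)) t
      = (deriv (fun s => -(q s) ^ 2) t) ^ 2 / (2 * (-(q t) ^ 2))
        - σ ^ 2 / (2 * (-(q t) ^ 2)) := by
  have h1 : deriv (fun s => -(q s) ^ 2) = fun t => -(2 * q t * deriv q t) := by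
    funext t
    have : HasDerivAt (fun s => -(q s) ^ 2) (-(2 * q t * deriv q t)) t := by
      have : HasDerivAt (fun s => -(q s) ^ 2) _ t := ((hq t).hasDerivAt.pow 2).neg
      simpa [mul_comm, mul_assoc, mul_left_comm] using this
    exact this.deriv
  intro t
  have h2 : deriv (deriv (fun s => -(q s) ^ 2)) t
      = -(2 * (deriv q t * deriv q t + q t * deriv (deriv q) t)) := by
    rw [h1]
    have : HasDerivAt (fun t => -(2 * q t * deriv q t))
        (-(2 * (deriv q t * deriv q t + q t * deriv (deriv q) t))) t := by
      have : HasDerivAt (fun t => -(2 * (q t * deriv q t))) _ t :=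
        (((hq t).hasDerivAt.mul (hq' t).hasDerivAt).const_mul 2).neg
      simpa [mul_add, mul_comm, mul_assoc, mul_left_comm] using this
    exact this.deriv
  have hqq : deriv (deriv q) t = -(σ ^ 2 / 4) * (1 / (q t) ^ 3) := by
    have := heq t; linarith
  rw [h2, h1, hqq]
  have h0 := hq0 t
  field_simp
  ring
end

section
/- Let h : ℝ → ℝ be twice differentiable and nowhere vanishing, and let f : ℝ → ℝ be three times differentiable and nowhere vanishing, satisfying the linear third-order equation f''' − (2h'/h)·f'' + (2·(h'/h)² − h''/h)·f' = 0. Then x = f'/(h·f) satisfies the time-dependent second-order Riccati equation x'' + 3h·x·x' + h'·x² + h²·x³ = 0. -/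
/-- The projective transformation x = f'/(hf) linearizes the
time-dependent second-order Riccati equation. -/
theorem second_order_riccati_from_linear_third_order
    (h : ℝ → ℝ)
    (hhD : Differentiable ℝ h) (hhD' : Differentiable ℝ (deriv h))
    (hh0 : ∀ t, h t ≠ 0)
    (f : ℝ → ℝ)
    (hfD : Differentiable ℝ f) (hfD' : Differentiable ℝ (deriv f))
    (hfD'' : Differentiable ℝ (deriv (deriv f)))
    (hf0 : ∀ t, f t ≠ 0)
    (hlin : ∀ t, deriv (deriv (deriv f)) t
        - (2 * deriv h t / h t) * deriv (deriv f) t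
        + (2 * (deriv h t / h t) ^ 2 - deriv (deriv h) t / h t) * deriv f t = 0) :
    ∀ t, deriv (deriv (fun s => deriv f s / (h s * f s))) t
      + 3 * h t * (deriv f t / (h t * f t))
          * deriv (fun s => deriv f s / (h s * f s)) t
      + deriv h t * (deriv f t / (h t * f t)) ^ 2
      + (h t) ^ 2 * (deriv f t / (h t * f t)) ^ 3 = 0 := by
  have hHF : ∀ t, h t * f t ≠ 0 := fun t => mul_ne_zero (hh0 t) (hf0 t)
  set A : ℝ → ℝ := fun t =>
    (deriv (deriv f) t * (h t * f t)
      - deriv f t * (deriv h t * f t + h t * deriv f t)) / (h t * f t) ^ 2 with hA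
  have hHF' : ∀ t, HasDerivAt (fun s => h s * f s)
      (deriv h t * f t + h t * deriv f t) t := fun t =>
    ((hhD t).hasDerivAt.mul (hfD t).hasDerivAt)
  have hxA : ∀ t, HasDerivAt (fun s => deriv f s / (h s * f s)) (A t) t := by
    intro t
    exact ((hfD' t).hasDerivAt.div (hHF' t) (hHF t))
  have hderiv1 : deriv (fun s => deriv f s / (h s * f s)) = A :=
    funext fun t => (hxA t).deriv
  intro t
  -- derivative of numerator of A
  have hN : HasDerivAt (fun s => deriv (deriv f) s * (h s * f s)
      - deriv f s * (deriv h s * f s + h s * deriv f s))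
      (deriv (deriv (deriv f)) t * (h t * f t)
        + deriv (deriv f) t * (deriv h t * f t + h t * deriv f t)
        - (deriv (deriv f) t * (deriv h t * f t + h t * deriv f t)
          + deriv f t * ((deriv (deriv h) t * f t + deriv h t * deriv f t)
            + (deriv h t * deriv f t + h t * deriv (deriv f) t)))) t := by
    exact ((hfD'' t).hasDerivAt.mul (hHF' t)).sub
      ((hfD' t).hasDerivAt.mul
        (((hhD' t).hasDerivAt.mul (hfD t).hasDerivAt).add
          ((hhD t).hasDerivAt.mul (hfD' t).hasDerivAt)))
  have hD : HasDerivAt (fun s => (h s * f s) ^ 2)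
      (2 * (h t * f t) ^ 1 * (deriv h t * f t + h t * deriv f t)) t := by
    have := (hHF' t).pow 2; simp at this; rw [pow_one]; exact this
  have hAd : HasDerivAt A _ t := hN.div hD (pow_ne_zero 2 (hHF t))
  rw [hderiv1, hAd.deriv]
  have h3 : deriv (deriv (deriv f)) t
      = (2 * deriv h t / h t) * deriv (deriv f) t
        - (2 * (deriv h t / h t) ^ 2 - deriv (deriv h) t / h t) * deriv f t := by
    have := hlin t; linarith
  rw [h3]
  simp only [hA]
  field_simp [hh0 t, hf0 t]
  ring_nf
end

section
/- Let a : ℝ → ℝ be differentiable and let b : ℝ → ℝ be differentiable with b'(t) = a(t)²/2 for all t. Suppose x, p : ℝ → ℝ are differentiable, x is nowhere vanishing, and they satisfy Hamilton's equations x' = x³·(p + b) and p' = −(3/2)·x²·(p + b)² + a'/x associated with the Hamiltonian H(x, p, t) = (1/2)·x³·(p + b(t))² − a'(t)·log x. Then x is twice differentiable and satisfies the reduced Gambier equation x'' = (3/2)·(x')²/x + (a²/2)·x³ + a'·x². -/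
/-- Hamilton's equations for H(x,p,t) = ½x³(p+b)² − a'·log x imply
the reduced Gambier equation x'' = (3/2)x'²/x + (a²/2)x³ + a'x². -/
theorem reduced_gambier_from_hamilton
    (a b : ℝ → ℝ)
    (haD : Differentiable ℝ a)
    (hbD : Differentiable ℝ b) (hb' : ∀ t, deriv b t = (a t) ^ 2 / 2)
    (x p : ℝ → ℝ)
    (hxD : Differentiable ℝ x) (hpD : Differentiable ℝ p)
    (hx0 : ∀ t, x t ≠ 0)
    (ham₁ : ∀ t, deriv x t = (x t) ^ 3 * (p t + b t))
    (ham₂ : ∀ t, deriv p t = -(3 / 2) * (x t) ^ 2 * (p t + b t) ^ 2 + deriv a t / x t) :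
    Differentiable ℝ (deriv x) ∧
      ∀ t, deriv (deriv x) t =
        (3 / 2) * (deriv x t) ^ 2 / x t
        + ((a t) ^ 2 / 2) * (x t) ^ 3
        + deriv a t * (x t) ^ 2 := by
  have hder : deriv x = fun t => (x t) ^ 3 * (p t + b t) := funext ham₁
  constructor
  · rw [hder]; exact (hxD.pow 3).mul (hpD.add hbD)
  · intro t
    rw [hder]
    have h1 : deriv (fun t => x t ^ 3 * (p t + b t)) t =
      ((3 : ℕ) : ℝ) * x t ^ (3 - 1) * deriv x t * (p t + b t) + x t ^ 3 * (deriv p t + deriv b t) := (((hxD t).hasDerivAt.pow 3).mul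
      (((hpD t).hasDerivAt).add ((hbD t).hasDerivAt))).deriv
    rw [h1, ham₁ t, ham₂ t, hb' t]
    field_simp [hx0 t]
    ring
end

section
/- Let ω be a real constant and f, g : ℝ → ℝ functions. Let A, B : ℝ → ℝ be differentiable functions satisfying, for all s, the three conditions A(s)² + A'(s) − A(s)·f(s) = 0, B'(s) + 2·A(s)·B(s) = 0, and A(s)·g(s) − B(s)² = ω². Suppose x : ℝ → ℝ is twice differentiable and satisfies the Liénard-II equation x'' + f(x)·(x')² + g(x) = 0, and X : ℝ → ℝ is a twice differentiable nowhere-vanishing function satisfying the nonlocal relation X'(t) = X(t)·(A(x(t))·x'(t) + B(x(t))) for all t. Then X satisfies the linear harmonic oscillator equation X'' + ω²·X = 0. -/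
/-- A nonlocal Sundman-type transformation maps the Liénard-II
equation to the linear harmonic oscillator, given the compatibility conditions. -/
theorem harmonic_oscillator_from_lienard_II_sundman
    (ω : ℝ) (f g : ℝ → ℝ)
    (A B : ℝ → ℝ)
    (hAD : Differentiable ℝ A) (hBD : Differentiable ℝ B)
    (hcond₁ : ∀ s, (A s) ^ 2 + deriv A s - A s * f s = 0)
    (hcond₂ : ∀ s, deriv B s + 2 * A s * B s = 0)
    (hcond₃ : ∀ s, A s * g s - (B s) ^ 2 = ω ^ 2)
    (x : ℝ → ℝ)
    (hxD : Differentiable ℝ x) (hxD' : Differentiable ℝ (deriv x))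
    (hlienard : ∀ t, deriv (deriv x) t + f (x t) * (deriv x t) ^ 2 + g (x t) = 0)
    (X : ℝ → ℝ)
    (hXD : Differentiable ℝ X) (hXD' : Differentiable ℝ (deriv X))
    (hX0 : ∀ t, X t ≠ 0)
    (hnonlocal : ∀ t, deriv X t = X t * (A (x t) * deriv x t + B (x t))) :
    ∀ t, deriv (deriv X) t + ω ^ 2 * X t = 0 := by
  intro t
  have hXf : deriv X = fun t => X t * (A (x t) * deriv x t + B (x t)) :=
    funext hnonlocal
  have hx : HasDerivAt x (deriv x t) t := (hxD t).hasDerivAt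
  have hx' : HasDerivAt (deriv x) (deriv (deriv x) t) t := (hxD' t).hasDerivAt
  have hA : HasDerivAt (fun t => A (x t)) (deriv A (x t) * deriv x t) t :=
    ((hAD (x t)).hasDerivAt).comp t hx
  have hB : HasDerivAt (fun t => B (x t)) (deriv B (x t) * deriv x t) t :=
    ((hBD (x t)).hasDerivAt).comp t hx
  have hXt : HasDerivAt X (deriv X t) t := (hXD t).hasDerivAt
  have hinner : HasDerivAt (fun t => A (x t) * deriv x t + B (x t))
      (deriv A (x t) * deriv x t * deriv x t + A (x t) * deriv (deriv x) t
        + deriv B (x t) * deriv x t) t := (hA.mul hx').add hB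
  have hprod := hXt.mul hinner
  have hderiv2 : deriv (deriv X) t =
      deriv X t * (A (x t) * deriv x t + B (x t)) +
      X t * (deriv A (x t) * deriv x t * deriv x t + A (x t) * deriv (deriv x) t
        + deriv B (x t) * deriv x t) := by
    conv_lhs => rw [hXf]
    exact hprod.deriv
  have h1 := hcond₁ (x t)
  have h2 := hcond₂ (x t)
  have h3 := hcond₃ (x t)
  have hl := hlienard t
  rw [hderiv2, hnonlocal t]
  linear_combination X t * deriv x t ^ 2 * h1 + X t * deriv x t * h2 +
    X t * A (x t) * hl - X t * h3
end

section
/- Let n be a nonzero real number, σ a real constant, and a, b : ℝ → ℝ differentiable functions. Let x : ℝ → ℝ be twice differentiable and nowhere vanishing, and define y : ℝ → ℝ by y = x'/n − σ/n − (b/2)·x − (a/n)·x², that is, y is the result of applying the operator 𝔾 = d/dt − ((n−1)/n)·(x'/x) − (σ/(nx) + b/2 + ax/n) to x. If y is differentiable and satisfies 𝔾y = y' − ((n−1)/n)·(x'/x)·y − (σ/(nx) + b/2 + a·x/n)·y = 0 (i.e. 𝔾²x = 0), then x satisfies the Gambier equation x'' = ((n−1)/n)·(x')²/x + a·((n+2)/n)·x·x'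 + b·x' − ((n−2)/n)·σ·x'/x − (a²/n)·x³ + (a' − ab)·x² + (cn − 2aσ/n)·x − bσ − σ²/(nx), where c = b'/2 − b²/4. -/
/-- 𝔾²x = 0, where 𝔾 = d/dt − ((n−1)/n)·(x'/x) − (σ/(nx) + b/2 + ax/n)
is the generalized Riccati operator, gives the Gambier equation with
c = b'/2 − b²/4. -/
theorem gambier_from_generalized_riccati_operator
    (n σ : ℝ) (hn : n ≠ 0)
    (a b : ℝ → ℝ)
    (haD : Differentiable ℝ a) (hbD : Differentiable ℝ b)
    (x : ℝ → ℝ)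
    (hxD : Differentiable ℝ x) (hxD' : Differentiable ℝ (deriv x))
    (hx0 : ∀ t, x t ≠ 0)
    (y : ℝ → ℝ)
    (hy : ∀ t, y t = deriv x t / n - σ / n - (b t / 2) * x t - (a t / n) * (x t) ^ 2)
    (hyD : Differentiable ℝ y)
    (hG2 : ∀ t, deriv y t - ((n - 1) / n) * (deriv x t / x t) * y t
        - (σ / (n * x t) + b t / 2 + a t * x t / n) * y t = 0) :
    ∀ t, deriv (deriv x) t =
      ((n - 1) / n) * (deriv x t) ^ 2 / x t
      + a t * ((n + 2) / n) * x t * deriv x t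
      + b t * deriv x t
      - ((n - 2) / n) * σ * deriv x t / x t
      - (a t) ^ 2 / n * (x t) ^ 3
      + (deriv a t - a t * b t) * (x t) ^ 2
      + ((deriv b t / 2 - (b t) ^ 2 / 4) * n - 2 * a t * σ / n) * x t
      - b t * σ
      - σ ^ 2 / (n * x t) := by
  intro t
  have hyfun : y = fun t => deriv x t / n - σ / n - (b t / 2) * x t - (a t / n) * (x t) ^ 2 :=
    funext hy
  have hder : HasDerivAt y
      (deriv (deriv x) t / n - (deriv b t / 2 * x t + b t / 2 * deriv x t)
        - (deriv a t / n * (x t) ^ 2 + a t / n * (2 * x t * deriv x t))) t := by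
    rw [hyfun]
    have h1 : HasDerivAt (fun t => deriv x t / n) (deriv (deriv x) t / n) t :=
      ((hxD'.differentiableAt).hasDerivAt).div_const n
    have h2 : HasDerivAt (fun _ : ℝ => σ / n) 0 t := hasDerivAt_const _ _
    have h3 : HasDerivAt (fun t => (b t / 2) * x t)
        (deriv b t / 2 * x t + b t / 2 * deriv x t) t :=
      (((hbD t).hasDerivAt).div_const 2).mul (hxD t).hasDerivAt
    have h4 : HasDerivAt (fun t => (a t / n) * (x t) ^ 2)
        (deriv a t / n * (x t) ^ 2 + a t / n * (2 * x t * deriv x t)) t := by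
      have hx2 : HasDerivAt (fun t => (x t) ^ 2) (2 * x t * deriv x t) t := by
        simpa using ((hxD t).hasDerivAt).fun_pow 2
      exact (((haD t).hasDerivAt).div_const n).mul hx2
    simpa using ((h1.fun_sub h2).fun_sub h3).fun_sub h4
  have hdy := hder.deriv
  have E := hG2 t
  rw [hdy, hy t] at E
  have hxt := hx0 t
  linear_combination (norm := (field_simp; ring1)) n * E
end
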